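/- Proposition (0/1 truth-theoretic interpretation, subject case): suppose the verb degrees are 0/1-valued, i.e. α(k,l) = 1 if (k,l) ∈ R and 0 otherwise for a relation R ⊆ U × U. Then the h-coordinate of the meaning vector m = μ( χ_P ⊗ 's( μ( χ_K ⊗ (id_N ⊗ ε)(verb ⊗ χ_L) ) ) ) equals the number of pairs (k,l) ∈ K × L with owns(h,k) and R(k,l) when h ∈ P, and equals 0 when h ∉ P; consequently the support of m equals the Montague interpretation of the clause, { h ∈ P | ∃ k ∈ K, owns(h,k) ∧ ∃ l ∈ L, R(k,l) }. -/

import Mathlib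

/-! In the basis `e_u` every map involved is diagonal or a 0/1 matrix: `μ` multiplies
coordinates, `(id ⊗ ε)` contracts the verb matrix with `χ_L`, and `'s` sums over owned entities.
Hence `m h = [h ∈ P] · ∑_{k ∈ K, owns h k} #{l ∈ L | R k l}`, which is the stated count, and it
is nonzero exactly when a witnessing pair exists. -/

open TensorProduct

noncomputable def eVec (U : Type*) [DecidableEq U] (i : U) : U → ℝ := Pi.single i 1

noncomputable def muMap (U : Type*) :
    (U → ℝ) ⊗[ℝ] (U → ℝ) →ₗ[ℝ] (U → ℝ) :=
  TensorProduct.lift (LinearMap.mul ℝ (U → ℝ))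

noncomputable def epsMap (U : Type*) [Fintype U] :
    (U → ℝ) ⊗[ℝ] (U → ℝ) →ₗ[ℝ] ℝ :=
  TensorProduct.lift (LinearMap.mk₂ ℝ (fun v w => ∑ i, v i * w i)
    (fun v v' w => by simp [add_mul, Finset.sum_add_distrib])
    (fun c v w => by simp [Finset.mul_sum, mul_assoc])
    (fun v w w' => by simp [mul_add, Finset.sum_add_distrib])
    (fun c v w => by simp [Finset.mul_sum, mul_left_comm]))

noncomputable def deltaMap (U : Type*) [Fintype U] [DecidableEq U] :
    (U → ℝ) →ₗ[ℝ] (U → ℝ) ⊗[ℝ] (U → ℝ) where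
  toFun v := ∑ i, v i • (eVec U i ⊗ₜ[ℝ] eVec U i)
  map_add' v w := by simp [add_smul, Finset.sum_add_distrib]
  map_smul' c v := by simp [smul_smul, Finset.smul_sum]

noncomputable def iotaMap (U : Type*) [Fintype U] : (U → ℝ) →ₗ[ℝ] ℝ where
  toFun v := ∑ i, v i
  map_add' v w := by simp [Finset.sum_add_distrib]
  map_smul' c v := by simp [Finset.mul_sum]

noncomputable def etaMap (U : Type*) [Fintype U] [DecidableEq U] :
    ℝ →ₗ[ℝ] (U → ℝ) ⊗[ℝ] (U → ℝ) :=
  LinearMap.toSpanSingleton ℝ _ (∑ i, eVec U i ⊗ₜ[ℝ] eVec U i)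

noncomputable def zetaMap (U : Type*) [Fintype U] [DecidableEq U] :
    ℝ →ₗ[ℝ] (U → ℝ) :=
  LinearMap.toSpanSingleton ℝ _ (∑ i, eVec U i)

section

variable {U : Type*}

theorem sum_eVec_apply [DecidableEq U] (s : Finset U) (u : U) :
    (∑ i ∈ s, eVec U i) u = if u ∈ s then 1 else 0 := by
  simp [eVec, Finset.sum_apply, Pi.single_apply]

theorem muMap_tmul (f g : U → ℝ) : muMap U (f ⊗ₜ g) = f * g := rfl

theorem epsMap_tmul [Fintype U] (v w : U → ℝ) : epsMap U (v ⊗ₜ w) = ∑ i, v i * w i := rfl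

theorem rid_lTensor_epsMap_assoc_tmul [Fintype U] (a b c : U → ℝ) :
    TensorProduct.rid ℝ (U → ℝ) (LinearMap.lTensor (U → ℝ) (epsMap U)
      (TensorProduct.assoc ℝ (U → ℝ) (U → ℝ) (U → ℝ) ((a ⊗ₜ b) ⊗ₜ c)))
      = (∑ i, b i * c i) • a := by
  rw [assoc_tmul, LinearMap.lTensor_tmul, epsMap_tmul, rid_tmul]

theorem rid_lTensor_epsMap_assoc_matrix_tmul_apply [Fintype U] [DecidableEq U]
    (α : U × U → ℝ) (v : U → ℝ) (k : U) :
    TensorProduct.rid ℝ (U → ℝ) (LinearMap.lTensor (U → ℝ) (epsMap U)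
      (TensorProduct.assoc ℝ (U → ℝ) (U → ℝ) (U → ℝ)
        ((∑ i : U, ∑ j : U, α (i, j) • (eVec U i ⊗ₜ[ℝ] eVec U j)) ⊗ₜ v))) k
      = ∑ j, α (k, j) * v j := by
  simp only [sum_tmul, smul_tmul', map_sum, rid_lTensor_epsMap_assoc_tmul]
  simp [eVec, Finset.sum_apply, Pi.single_apply, mul_comm]

theorem apply_eq_sum_filter_of_apply_eVec [Fintype U] [DecidableEq U]
    (f : (U → ℝ) →ₗ[ℝ] (U → ℝ)) (r : U → U → Prop) [DecidableRel r]
    (hf : ∀ k, f (eVec U k) = ∑ h ∈ Finset.univ.filter (fun h => r h k), eVec U h)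
    (w : U → ℝ) (h : U) :
    f w h = ∑ k ∈ Finset.univ.filter (r h), w k := by
  rw [LinearMap.pi_apply_eq_sum_univ f w, Finset.sum_apply, Finset.sum_filter]
  refine Finset.sum_congr rfl fun k _ => ?_
  have basis_eq : (fun j => if k = j then (1 : ℝ) else 0) = eVec U k := by
    ext j
    simp [eVec, Pi.single_apply, eq_comm]
  rw [basis_eq, hf, Pi.smul_apply, sum_eVec_apply]
  simp

theorem card_filter_product_eq_sum (K L : Finset U) (p : U → Prop) (q : U → U → Prop)
    [DecidablePred p] [DecidableRel q] :
    ((K ×ˢ L).filter (fun x => p x.1 ∧ q x.1 x.2)).card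
      = ∑ k ∈ K.filter p, (L.filter (q k)).card := by
  rw [Finset.card_filter, Finset.sum_product, Finset.sum_filter]
  refine Finset.sum_congr rfl fun k _ => ?_
  by_cases hk : p k <;> simp only [hk, true_and, false_and, if_true, if_false,
    Finset.sum_const_zero, Finset.card_filter]

end

/-- 0/1 truth-theoretic interpretation (subject case): if the verb
    degrees are 0/1-valued, given by a relation R, then for h ∈ P the h-coordinate
    of m = μ( χ_P ⊗ 's( μ( χ_K ⊗ (id_N ⊗ ε)(verb ⊗ χ_L) ) ) ) counts the pairs
    (k,l) ∈ K × L with owns(h,k) and R(k,l), for h ∉ P it is 0, and the support of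
    m is the Montague interpretation { h ∈ P | ∃ k ∈ K, owns(h,k) ∧ ∃ l ∈ L, R(k,l) }. -/
theorem possessive_subject_truth_theoretic (U : Type*) [Fintype U] [DecidableEq U]
    (P K L : Finset U) (α : U × U → ℝ)
    (owns : U → U → Prop) [DecidableRel owns]
    (R : U → U → Prop) [DecidableRel R]
    (hα : ∀ k l : U, α (k, l) = if R k l then 1 else 0)
    (possS : (U → ℝ) →ₗ[ℝ] (U → ℝ))
    (hpossS : ∀ k : U, possS (eVec U k)
      = ∑ h ∈ Finset.univ.filter (fun h => owns h k), eVec U h)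
    (m : U → ℝ)
    (hm : m = muMap U ((∑ h ∈ P, eVec U h) ⊗ₜ[ℝ]
      possS (muMap U ((∑ k ∈ K, eVec U k) ⊗ₜ[ℝ]
        (TensorProduct.rid ℝ (U → ℝ))
          ((LinearMap.lTensor (U → ℝ) (epsMap U))
            ((TensorProduct.assoc ℝ (U → ℝ) (U → ℝ) (U → ℝ))
              ((∑ i : U, ∑ j : U, α (i, j) • (eVec U i ⊗ₜ[ℝ] eVec U j)) ⊗ₜ[ℝ]
                (∑ l ∈ L, eVec U l)))))))) :
    (∀ h : U, h ∈ P →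
        m h = (((K ×ˢ L).filter (fun p => owns h p.1 ∧ R p.1 p.2)).card : ℝ)) ∧
    (∀ h : U, h ∉ P → m h = 0) ∧
    {h : U | m h ≠ 0} = {h : U | h ∈ P ∧ ∃ k ∈ K, owns h k ∧ ∃ l ∈ L, R k l} := by
  have verb_contract : ∀ k, ∑ j, α (k, j) * (if j ∈ L then 1 else 0)
      = ((L.filter (R k)).card : ℝ) := by
    intro k
    simp only [hα, mul_ite, mul_one, mul_zero, Finset.card_filter]
    push_cast
    rw [← Finset.sum_filter, Finset.filter_mem_eq_inter, Finset.univ_inter]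
  have m_apply : ∀ h, m h = if h ∈ P
      then (((K ×ˢ L).filter (fun p => owns h p.1 ∧ R p.1 p.2)).card : ℝ) else 0 := by
    intro h
    rw [card_filter_product_eq_sum, hm, muMap_tmul, Pi.mul_apply, sum_eVec_apply,
      apply_eq_sum_filter_of_apply_eVec possS owns hpossS]
    simp only [muMap_tmul, Pi.mul_apply, sum_eVec_apply,
      rid_lTensor_epsMap_assoc_matrix_tmul_apply, verb_contract]
    split_ifs
    · push_cast
      simp only [one_mul, ite_mul, zero_mul]
      rw [← Finset.sum_filter]
      congr 1
      ext k
      simp [and_comm]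
    · rw [zero_mul]
  refine ⟨fun h hP => by rw [m_apply, if_pos hP], fun h hP => by rw [m_apply, if_neg hP], ?_⟩
  ext h
  simp [m_apply]
  aesop
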